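/- arXiv:2601.00154 — 5 statements merged into one kernel-verified Lean document; each statement's English description precedes it below -/
import Mathlib

section
/- For every integer K ≥ 2, the dual cone of the second-order cone C = {x ∈ ℝ^K : x ≥ 0 and 1ᵀx ≥ √(K−1)·‖x‖₂}, namely {y ∈ ℝ^K : ⟨y, x⟩ ≥ 0 for all x ∈ C}, equals C* = {x ∈ ℝ^K : 1ᵀx ≥ ‖x‖₂}. -/
open Matrix

/-- The Euclidean norm of a vector in `ℝ^n`. -/
noncomputable def euclNorm {n : ℕ} (x : Fin n → ℝ) : ℝ := Real.sqrt (∑ i, x i ^ 2)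

/-- The second-order cone `C = {x ∈ ℝ^K : x ≥ 0 and 1ᵀx ≥ √(K−1)·‖x‖₂}`. -/
noncomputable def SOC (K : ℕ) : Set (Fin K → ℝ) :=
  {x | (∀ i, 0 ≤ x i) ∧ Real.sqrt ((K : ℝ) - 1) * euclNorm x ≤ ∑ i, x i}

/-- `C* = {x ∈ ℝ^K : 1ᵀx ≥ ‖x‖₂}`. -/
noncomputable def dualSOC (K : ℕ) : Set (Fin K → ℝ) :=
  {x | euclNorm x ≤ ∑ i, x i}

lemma abs_le_euclNorm {n : ℕ} (x : Fin n → ℝ) (i : Fin n) : |x i| ≤ euclNorm x := by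
  rw [euclNorm, ← Real.sqrt_sq_eq_abs (x i)]
  exact Real.sqrt_le_sqrt (Finset.single_le_sum (f := fun j => x j ^ 2)
    (fun j _ => sq_nonneg _) (Finset.mem_univ i))

/-- for `K ≥ 2`, the dual cone of the second-order cone `C`
(the set of `y` with `⟨y, x⟩ ≥ 0` for all `x ∈ C`) equals `C*`. -/
theorem dual_of_SOC {K : ℕ} (hK : 2 ≤ K) :
    {y : Fin K → ℝ | ∀ x ∈ SOC K, 0 ≤ y ⬝ᵥ x} = dualSOC K := by
  have hKr : (2 : ℝ) ≤ (K : ℝ) := by exact_mod_cast hK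
  have hK0 : (0 : ℝ) < (K : ℝ) := by linarith
  ext y
  simp only [Set.mem_setOf_eq, dualSOC]
  constructor
  · -- dual cone ⊆ C*
    intro hy
    set n : ℝ := euclNorm y with hn
    have hn0 : 0 ≤ n := Real.sqrt_nonneg _
    have hn2 : n ^ 2 = ∑ i, y i ^ 2 := Real.sq_sqrt (Finset.sum_nonneg fun i _ => sq_nonneg _)
    set s : ℝ := ∑ i, y i with hs
    -- the test vector
    set x : Fin K → ℝ := fun i => n - y i with hx
    have hxi : ∀ i, 0 ≤ x i := fun i => by
      have := abs_le_euclNorm y i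
      have := le_abs_self (y i)
      simp only [hx]; linarith
    have hsum : ∑ i, x i = K * n - s := by
      simp [hx, Finset.sum_sub_distrib, hs, mul_comm]
    have hsle : s ≤ K * n := by
      have : s ≤ ∑ i : Fin K, |y i| := Finset.sum_le_sum fun i _ => le_abs_self _
      have h2 : ∑ i : Fin K, |y i| ≤ ∑ i : Fin K, n :=
        Finset.sum_le_sum fun i _ => abs_le_euclNorm y i
      simp at h2
      linarith
    have hxsq : ∑ i, x i ^ 2 = (K + 1) * n ^ 2 - 2 * n * s := by
      have : ∀ i, x i ^ 2 = n ^ 2 - 2 * n * y i + y i ^ 2 := fun i => by simp [hx]; ring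
      simp only [this, Finset.sum_add_distrib, Finset.sum_sub_distrib, ← Finset.mul_sum, ← hs,
        ← hn2]
      simp
      ring
    have hxC : x ∈ SOC K := by
      refine ⟨hxi, ?_⟩
      rw [hsum, euclNorm, ← Real.sqrt_mul (by linarith)]
      have key : ((K : ℝ) - 1) * (∑ i, x i ^ 2) ≤ (K * n - s) ^ 2 := by
        rw [hxsq]; nlinarith [sq_nonneg (n - s)]
      calc Real.sqrt (((K : ℝ) - 1) * ∑ i, x i ^ 2) ≤ Real.sqrt ((K * n - s) ^ 2) :=
            Real.sqrt_le_sqrt key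
        _ = K * n - s := by rw [Real.sqrt_sq (by linarith)]
    have hdot : y ⬝ᵥ x = n * s - n ^ 2 := by
      have h1 : ∀ i, y i * x i = y i * n - y i ^ 2 := fun i => by simp only [hx]; ring
      simp only [dotProduct, h1, Finset.sum_sub_distrib, ← Finset.sum_mul, ← hs, ← hn2]
      ring
    have h0 : 0 ≤ n * s - n ^ 2 := by rw [← hdot]; exact hy x hxC
    rcases eq_or_lt_of_le hn0 with h | h
    · -- n = 0 : every y i = 0
      have : ∀ i, y i = 0 := fun i => by
        have h1 := abs_le_euclNorm y i
        rw [← hn, ← h] at h1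
        exact abs_eq_zero.mp (le_antisymm h1 (abs_nonneg _))
      have h2 : s = 0 := by simp [hs, this]
      exact le_of_eq (by rw [← h, h2])
    · nlinarith
  · -- C* ⊆ dual cone
    intro hy x hx
    obtain ⟨hxpos, hxcone⟩ := hx
    set a : ℝ := ∑ i, y i ^ 2 with ha
    set b : ℝ := ∑ i, x i ^ 2 with hb
    set s : ℝ := ∑ i, y i with hs
    set t : ℝ := ∑ i, x i with ht
    have ha0 : 0 ≤ a := Finset.sum_nonneg fun i _ => sq_nonneg _
    have hb0 : 0 ≤ b := Finset.sum_nonneg fun i _ => sq_nonneg _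
    have hs0 : 0 ≤ s := le_trans (Real.sqrt_nonneg _) hy
    have ht0 : 0 ≤ t := Finset.sum_nonneg fun i _ => hxpos i
    have hya : a ≤ s ^ 2 := by
      have := Real.sqrt_le_sqrt (le_of_eq ha.symm)
      have h1 : Real.sqrt a ≤ s := by rwa [euclNorm, ← ha] at hy
      nlinarith [Real.sq_sqrt ha0, Real.sqrt_nonneg a]
    have hxb : ((K : ℝ) - 1) * b ≤ t ^ 2 := by
      have h1 : Real.sqrt ((K : ℝ) - 1) * Real.sqrt b ≤ t := by rwa [euclNorm, ← hb] at hxcone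
      have h2 : Real.sqrt (((K : ℝ) - 1) * b) ≤ t := by
        rwa [Real.sqrt_mul (by linarith)]
      nlinarith [Real.sq_sqrt (mul_nonneg (by linarith : (0:ℝ) ≤ (K : ℝ) - 1) hb0),
        Real.sqrt_nonneg (((K : ℝ) - 1) * b)]
    set p : ℝ := y ⬝ᵥ x with hp
    have hpsum : p = ∑ i, y i * x i := rfl
    clear_value a b s t p
    -- variance nonnegativity from Cauchy-Schwarz with the all-ones vector
    have hvar_y : s ^ 2 ≤ K * a := by
      have := Finset.sum_mul_sq_le_sq_mul_sq Finset.univ y (fun _ => (1 : ℝ))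
      simpa [← hs, ← ha, mul_comm] using this
    have hvar_x : t ^ 2 ≤ K * b := by
      have := Finset.sum_mul_sq_le_sq_mul_sq Finset.univ x (fun _ => (1 : ℝ))
      simpa [← ht, ← hb, mul_comm] using this
    -- Cauchy-Schwarz on centered vectors, cleared of denominators
    have hCS : ((K : ℝ) * p - s * t) ^ 2 ≤ ((K : ℝ) * a - s ^ 2) * ((K : ℝ) * b - t ^ 2) := by
      have hcs := Finset.sum_mul_sq_le_sq_mul_sq Finset.univ
        (fun i => (K : ℝ) * y i - s) (fun i => (K : ℝ) * x i - t)
      have e1 : ∑ i, ((K : ℝ) * y i - s) * ((K : ℝ) * x i - t)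
          = (K : ℝ) * ((K : ℝ) * p - s * t) := by
        have : ∀ i, ((K : ℝ) * y i - s) * ((K : ℝ) * x i - t)
            = (K : ℝ) ^ 2 * (y i * x i) - (K : ℝ) * t * y i - (K : ℝ) * s * x i + s * t := by
          intro i; ring
        simp only [this, Finset.sum_add_distrib, Finset.sum_sub_distrib, ← Finset.mul_sum,
          ← hs, ← ht, hpsum]
        simp
        ring
      have e2 : ∑ i, ((K : ℝ) * y i - s) ^ 2 = (K : ℝ) * ((K : ℝ) * a - s ^ 2) := by
        have : ∀ i, ((K : ℝ) * y i - s) ^ 2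
            = (K : ℝ) ^ 2 * y i ^ 2 - 2 * (K : ℝ) * s * y i + s ^ 2 := by intro i; ring
        simp only [this, Finset.sum_add_distrib, Finset.sum_sub_distrib, ← Finset.mul_sum,
          ← hs, ← ha]
        simp
        ring
      have e3 : ∑ i, ((K : ℝ) * x i - t) ^ 2 = (K : ℝ) * ((K : ℝ) * b - t ^ 2) := by
        have : ∀ i, ((K : ℝ) * x i - t) ^ 2
            = (K : ℝ) ^ 2 * x i ^ 2 - 2 * (K : ℝ) * t * x i + t ^ 2 := by intro i; ring
        simp only [this, Finset.sum_add_distrib, Finset.sum_sub_distrib, ← Finset.mul_sum,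
          ← ht, ← hb]
        simp
        ring
      rw [e1, e2, e3] at hcs
      have h4 : (K : ℝ) ^ 2 * (((K : ℝ) * p - s * t) ^ 2)
          ≤ (K : ℝ) ^ 2 * (((K : ℝ) * a - s ^ 2) * ((K : ℝ) * b - t ^ 2)) := by
        linear_combination hcs
      exact le_of_mul_le_mul_left h4 (by positivity)
    -- combine everything
    set A : ℝ := (K : ℝ) * a - s ^ 2 with hA_def
    set B : ℝ := (K : ℝ) * b - t ^ 2 with hB_def
    clear_value A B
    have hA : 0 ≤ A := by simp only [hA_def]; linarith
    have hB : 0 ≤ B := by simp only [hB_def]; linarith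
    have hA' : A ≤ ((K : ℝ) - 1) * s ^ 2 := by
      simp only [hA_def]; nlinarith
    have hB' : ((K : ℝ) - 1) * B ≤ t ^ 2 := by
      simp only [hB_def]; nlinarith
    have hprod : ((K : ℝ) - 1) * (A * B) ≤ ((K : ℝ) - 1) * (s ^ 2 * t ^ 2) := by
      have h1 : A * (((K : ℝ) - 1) * B) ≤ A * t ^ 2 :=
        mul_le_mul_of_nonneg_left hB' hA
      have h2 : A * t ^ 2 ≤ (((K : ℝ) - 1) * s ^ 2) * t ^ 2 :=
        mul_le_mul_of_nonneg_right hA' (sq_nonneg t)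
      calc ((K : ℝ) - 1) * (A * B) = A * (((K : ℝ) - 1) * B) := by ring
        _ ≤ A * t ^ 2 := h1
        _ ≤ (((K : ℝ) - 1) * s ^ 2) * t ^ 2 := h2
        _ = ((K : ℝ) - 1) * (s ^ 2 * t ^ 2) := by ring
    have hprod' : A * B ≤ s ^ 2 * t ^ 2 :=
      le_of_mul_le_mul_left hprod (by linarith : (0 : ℝ) < (K : ℝ) - 1)
    have hsq : ((K : ℝ) * p - s * t) ^ 2 ≤ (s * t) ^ 2 := by
      calc ((K : ℝ) * p - s * t) ^ 2 ≤ A * B := hCS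
        _ ≤ s ^ 2 * t ^ 2 := hprod'
        _ = (s * t) ^ 2 := by ring
    have hst : 0 ≤ s * t := mul_nonneg hs0 ht0
    have h5 : |(K : ℝ) * p - s * t| ≤ s * t := by
      rw [← Real.sqrt_sq_eq_abs]
      calc Real.sqrt (((K : ℝ) * p - s * t) ^ 2) ≤ Real.sqrt ((s * t) ^ 2) :=
            Real.sqrt_le_sqrt hsq
        _ = s * t := Real.sqrt_sq hst
    have h6 : (K : ℝ) * 0 ≤ (K : ℝ) * p := by
      have := (abs_le.mp h5).1
      linarith
    exact le_of_mul_le_mul_left h6 hK0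
end

section
/- Let W ∈ ℝ^{I×K} with W1 = 1 and rank(W) = K, let G ∈ ℝ^{K×J} with G1 = 1, and let U ∈ ℝ^{K×K} be invertible. Then the sum-to-one conditions (WU)1 = 1 and (U⁻¹G)1 = 1 both hold if and only if U1 = 1. -/
open Matrix

lemma mulVec_inj_of_rank {I K : ℕ} (W : Matrix (Fin I) (Fin K) ℝ)
    (hrW : W.rank = K) : Function.Injective (W.mulVec) := by
  have h : LinearMap.ker W.mulVecLin = ⊥ := by
    have := LinearMap.finrank_range_add_finrank_ker W.mulVecLin
    rw [Matrix.rank] at hrW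
    simp [hrW] at this
    exact this
  have := LinearMap.ker_eq_bot.mp h
  exact this

/-- for `W` with `W1 = 1` and `rank(W) = K`, `G` with `G1 = 1`, and
invertible `U`, the sum-to-one conditions `(WU)1 = 1` and `(U⁻¹G)1 = 1` both hold
if and only if `U1 = 1`. -/
theorem sum_to_one_iff {I J K : ℕ} (hI : 0 < I) (hJ : 0 < J) (hK : 0 < K)
    (hKI : K ≤ I) (hKJ : K ≤ J)
    (W : Matrix (Fin I) (Fin K) ℝ) (G : Matrix (Fin K) (Fin J) ℝ)
    (U : Matrix (Fin K) (Fin K) ℝ)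
    (hW1 : W *ᵥ 1 = 1) (hrW : W.rank = K) (hG1 : G *ᵥ 1 = 1)
    (hU : IsUnit U.det) :
    ((W * U) *ᵥ 1 = 1 ∧ (U⁻¹ * G) *ᵥ 1 = 1) ↔ U *ᵥ 1 = 1 := by
  constructor
  · rintro ⟨h1, _⟩
    apply mulVec_inj_of_rank W hrW
    rw [hW1, ← h1, ← mulVec_mulVec]
  · intro h
    constructor
    · rw [← mulVec_mulVec, h, hW1]
    · rw [← mulVec_mulVec, hG1]
      have : U⁻¹ *ᵥ (U *ᵥ (1 : Fin K → ℝ)) = U⁻¹ *ᵥ 1 := by rw [h]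
      rw [mulVec_mulVec, nonsing_inv_mul U hU, one_mulVec] at this
      exact this.symm
end

section
/- Let U ∈ ℝ^{K×K} satisfy U1 = 1 and suppose every row of U lies in C*, i.e. for each i = 1, …, K one has 1ᵀU(i,:)ᵀ ≥ ‖U(i,:)ᵀ‖₂. Then |det(U)| ≤ 1. -/
open Matrix

/-- Trace of a Hermitian matrix equals the sum of its eigenvalues. -/
lemma trace_eq_sum_eigs {K : ℕ} {M : Matrix (Fin K) (Fin K) ℝ} (hM : M.IsHermitian) :
    M.trace = ∑ i, hM.eigenvalues i := by
  conv_lhs => rw [hM.spectral_theorem]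
  rw [Unitary.conjStarAlgAut_apply, Matrix.trace_mul_cycle,
    (Matrix.mem_unitaryGroup_iff').mp (Matrix.IsHermitian.eigenvectorUnitary hM).2,
    one_mul, Matrix.trace_diagonal]
  simp

/-- if `U1 = 1` and every row of `U` lies in
`C* = {x : 1ᵀx ≥ ‖x‖₂}`, then `|det(U)| ≤ 1`. -/
theorem abs_det_le_one {K : ℕ} (U : Matrix (Fin K) (Fin K) ℝ)
    (hU1 : U *ᵥ 1 = 1)
    (hrows : ∀ i, euclNorm (U i) ≤ ∑ j, U i j) :
    |U.det| ≤ 1 := by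
  rcases Nat.eq_zero_or_pos K with hK | hK
  · subst hK
    simp [Matrix.det_isEmpty]
  -- each row has squared norm at most 1
  have hrowsum : ∀ i, ∑ j, U i j = 1 := by
    intro i
    have := congrFun hU1 i
    simpa [Matrix.mulVec, dotProduct] using this
  have hrow2 : ∀ i, ∑ j, U i j ^ 2 ≤ 1 := by
    intro i
    have h1 : Real.sqrt (∑ j, U i j ^ 2) ≤ 1 := by
      have := hrows i
      rw [hrowsum i] at this
      exact this
    have h2 : (0:ℝ) ≤ ∑ j, U i j ^ 2 := Finset.sum_nonneg fun j _ => sq_nonneg _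
    nlinarith [Real.sq_sqrt h2, Real.sqrt_nonneg (∑ j, U i j ^ 2)]
  -- positive semidefinite Gram matrix
  set M := U * Uᴴ with hMdef
  have hM : M.PosSemidef := Matrix.posSemidef_self_mul_conjTranspose U
  have hherm := hM.isHermitian
  set lam := hherm.eigenvalues with hlam
  have hlam0 : ∀ i, 0 ≤ lam i := hM.eigenvalues_nonneg
  -- trace bound
  have htrace : M.trace ≤ (K : ℝ) := by
    have : M.trace = ∑ i, ∑ j, U i j ^ 2 := by
      simp [hMdef, Matrix.trace, Matrix.diag, Matrix.mul_apply, sq]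
    rw [this]
    calc ∑ i, ∑ j, U i j ^ 2 ≤ ∑ _i : Fin K, (1:ℝ) :=
          Finset.sum_le_sum fun i _ => hrow2 i
      _ = (K : ℝ) := by simp
  have hsum_lam : ∑ i, lam i ≤ (K : ℝ) := by
    rw [← trace_eq_sum_eigs hherm]; exact htrace
  -- AM-GM
  have hKpos : (0:ℝ) < (K : ℝ) := by exact_mod_cast hK
  have hw : ∀ i ∈ (Finset.univ : Finset (Fin K)), (0:ℝ) ≤ (K:ℝ)⁻¹ := fun _ _ => by positivity
  have hw1 : ∑ _i : Fin K, (K:ℝ)⁻¹ = 1 := by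
    simp [Finset.sum_const, mul_inv_cancel₀ hKpos.ne']
  have hgm : ∏ i, lam i ^ ((K:ℝ)⁻¹) ≤ ∑ i, (K:ℝ)⁻¹ * lam i :=
    Real.geom_mean_le_arith_mean_weighted Finset.univ _ _ hw hw1 (fun i _ => hlam0 i)
  have hrhs : ∑ i, (K:ℝ)⁻¹ * lam i ≤ 1 := by
    rw [← Finset.mul_sum]
    calc (K:ℝ)⁻¹ * ∑ i, lam i ≤ (K:ℝ)⁻¹ * (K:ℝ) :=
          mul_le_mul_of_nonneg_left hsum_lam (by positivity)
      _ = 1 := inv_mul_cancel₀ hKpos.ne'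
  have hprod_rpow : (∏ i, lam i) ^ ((K:ℝ)⁻¹) ≤ 1 := by
    rw [← Real.finset_prod_rpow _ _ (fun i _ => hlam0 i)]
    exact hgm.trans hrhs
  have hprod_nonneg : (0:ℝ) ≤ ∏ i, lam i := Finset.prod_nonneg fun i _ => hlam0 i
  have hprod : ∏ i, lam i ≤ 1 := by
    by_contra h
    push_neg at h
    have : (1:ℝ) < (∏ i, lam i) ^ ((K:ℝ)⁻¹) :=
      Real.one_lt_rpow_iff_of_pos (lt_trans one_pos h) |>.mpr (Or.inl ⟨h, by positivity⟩)
    linarith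
  -- det M = det U ^ 2
  have hdetM : M.det = U.det ^ 2 := by
    simp [hMdef, Matrix.det_mul, Matrix.det_conjTranspose, sq]
  have hdet_prod : M.det = ∏ i, lam i := by
    simpa using hherm.det_eq_prod_eigenvalues
  have : U.det ^ 2 ≤ 1 := by rw [← hdetM, hdet_prod]; exact hprod
  nlinarith [abs_nonneg U.det, sq_abs U.det]
end

section
/- Let U ∈ ℝ^{K×K} satisfy U1 = 1 and suppose every row of U lies in C*, i.e. for each i = 1, …, K one has 1ᵀU(i,:)ᵀ ≥ ‖U(i,:)ᵀ‖₂. If |det(U)| = 1, then for every i one has ‖U(i,:)ᵀ‖₂ = 1ᵀU(i,:)ᵀ = 1; in particular, every row of U lies in the set {x ∈ ℝ^K : 1ᵀx = ‖x‖₂}. -/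
open Matrix

/-- Trace of a real hermitian matrix equals the sum of its eigenvalues. -/
lemma trace_eq_sum_eigenvalues' {n : ℕ} {A : Matrix (Fin n) (Fin n) ℝ}
    (hA : A.IsHermitian) : A.trace = ∑ i, hA.eigenvalues i := by
  conv_lhs => rw [hA.spectral_theorem, Unitary.conjStarAlgAut_apply]
  rw [Matrix.trace_mul_cycle]
  have h1 : (star (hA.eigenvectorUnitary : Matrix (Fin n) (Fin n) ℝ)) *
      (hA.eigenvectorUnitary : Matrix (Fin n) (Fin n) ℝ) = 1 := by
    simpa using Matrix.UnitaryGroup.star_mul_self hA.eigenvectorUnitary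
  rw [h1, Matrix.one_mul, Matrix.trace_diagonal]
  simp

/-- if `U1 = 1`, every row of `U` lies in `C* = {x : 1ᵀx ≥ ‖x‖₂}`, and
`|det(U)| = 1`, then every row satisfies `‖U(i,:)ᵀ‖₂ = 1ᵀU(i,:)ᵀ = 1`; in particular each
row lies in `{x : 1ᵀx = ‖x‖₂}`. -/
theorem rows_on_boundary_of_abs_det_eq_one {K : ℕ} (U : Matrix (Fin K) (Fin K) ℝ)
    (hU1 : U *ᵥ 1 = 1)
    (hrows : ∀ i, euclNorm (U i) ≤ ∑ j, U i j)
    (hdet : |U.det| = 1) :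
    ∀ i, euclNorm (U i) = ∑ j, U i j ∧ (∑ j, U i j) = 1 := by
  have hsum : ∀ i, ∑ j, U i j = 1 := by
    intro i
    have := congrFun hU1 i
    simpa [Matrix.mulVec, dotProduct] using this
  have hsqnn : ∀ i, (0:ℝ) ≤ ∑ j, U i j ^ 2 :=
    fun i => Finset.sum_nonneg fun j _ => sq_nonneg _
  have hsq_le : ∀ i, ∑ j, U i j ^ 2 ≤ 1 := by
    intro i
    have h1 : euclNorm (U i) ≤ 1 := (hrows i).trans_eq (hsum i)
    have h2 := Real.sq_sqrt (hsqnn i)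
    have h3 := Real.sqrt_nonneg (∑ j, U i j ^ 2)
    unfold euclNorm at h1
    nlinarith
  intro i₀
  have hK : 0 < K := i₀.pos
  set M := U * Uᴴ with hM
  have hPSD : M.PosSemidef := Matrix.posSemidef_self_mul_conjTranspose U
  have hH := hPSD.1
  have hdetM : M.det = 1 := by
    have hd2 : U.det * U.det = 1 := by
      have : |U.det| * |U.det| = 1 := by rw [hdet]; ring
      rwa [abs_mul_abs_self] at this
    rw [hM, Matrix.det_mul, Matrix.det_conjTranspose]
    simpa using hd2
  have hnn : ∀ i, 0 ≤ hH.eigenvalues i := hPSD.eigenvalues_nonneg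
  have hprod : ∏ i, hH.eigenvalues i = 1 := by
    have := hH.det_eq_prod_eigenvalues
    rw [hdetM] at this
    simpa using this.symm
  -- AM-GM: K ≤ ∑ eigenvalues
  have hsumlam : (K:ℝ) ≤ ∑ i, hH.eigenvalues i := by
    have hw : ∀ i ∈ (Finset.univ : Finset (Fin K)), (0:ℝ) ≤ (K:ℝ)⁻¹ := fun i _ => by positivity
    have hw' : ∑ _i : Fin K, (K:ℝ)⁻¹ = 1 := by
      simp [Finset.sum_const]
      field_simp
    have hz : ∀ i ∈ (Finset.univ : Finset (Fin K)), (0:ℝ) ≤ hH.eigenvalues i := fun i _ => hnn i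
    have h := Real.geom_mean_le_arith_mean_weighted Finset.univ
      (fun _ => (K:ℝ)⁻¹) hH.eigenvalues hw hw' hz
    have hL : ∏ i, hH.eigenvalues i ^ ((K:ℝ)⁻¹) = 1 := by
      rw [Real.finset_prod_rpow Finset.univ _ (fun i _ => hnn i) _, hprod, Real.one_rpow]
    rw [hL] at h
    have : (1:ℝ) ≤ (K:ℝ)⁻¹ * ∑ i, hH.eigenvalues i := by
      rw [Finset.mul_sum]
      simpa using h
    have hKpos : (0:ℝ) < K := by exact_mod_cast hK
    calc (K:ℝ) = K * 1 := by ring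
    _ ≤ K * ((K:ℝ)⁻¹ * ∑ i, hH.eigenvalues i) := by
        exact mul_le_mul_of_nonneg_left this (le_of_lt hKpos)
    _ = ∑ i, hH.eigenvalues i := by field_simp
  have htr : M.trace = ∑ i, ∑ j, U i j ^ 2 := by
    simp [hM, Matrix.trace, Matrix.diag, Matrix.mul_apply, Matrix.conjTranspose_apply, sq]
  have htr2 : M.trace = ∑ i, hH.eigenvalues i := trace_eq_sum_eigenvalues' hH
  have hKle : (K:ℝ) ≤ ∑ i, ∑ j, U i j ^ 2 := by rw [← htr, htr2]; exact hsumlam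
  have heach : ∀ i, ∑ j, U i j ^ 2 = 1 := by
    intro i
    by_contra h
    have hlt : ∑ j, U i j ^ 2 < 1 := lt_of_le_of_ne (hsq_le i) h
    have : ∑ i, ∑ j, U i j ^ 2 < ∑ _i : Fin K, (1:ℝ) :=
      Finset.sum_lt_sum (fun j _ => hsq_le j) ⟨i, Finset.mem_univ i, hlt⟩
    rw [Finset.sum_const, Finset.card_univ, Fintype.card_fin, nsmul_eq_mul, mul_one] at this
    linarith
  refine ⟨?_, hsum i₀⟩
  rw [hsum i₀]
  unfold euclNorm
  rw [heach i₀, Real.sqrt_one]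
end

section
/- Let K ≥ 2 and let G ∈ ℝ^{K×J} satisfy SSC1, i.e. C ⊆ cone(G) where C = {x ∈ ℝ^K : x ≥ 0 and 1ᵀx ≥ √(K−1)·‖x‖₂}. Then cone*(G) ⊆ C*, i.e. every y ∈ ℝ^K with Gᵀy ≥ 0 entrywise satisfies 1ᵀy ≥ ‖y‖₂. -/
open Matrix

/-- The convex cone generated by the columns of a matrix `A`:
`cone(A) = {Σ_j r_j A(:,j) : r_j ≥ 0}`. -/
def matCone {m n : ℕ} (A : Matrix (Fin m) (Fin n) ℝ) : Set (Fin m → ℝ) :=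
  {y | ∃ r : Fin n → ℝ, (∀ j, 0 ≤ r j) ∧ y = A.mulVec r}

set_option maxHeartbeats 1000000 in
/-- if `G ∈ ℝ^{K×J}` satisfies SSC1, i.e. `C ⊆ cone(G)`, then
`cone*(G) ⊆ C*`: every `y` with `Gᵀy ≥ 0` entrywise satisfies `1ᵀy ≥ ‖y‖₂`. -/
theorem dualCone_subset_dualSOC_of_SSC1 {K J : ℕ} (hK : 2 ≤ K)
    (G : Matrix (Fin K) (Fin J) ℝ) (hssc1 : SOC K ⊆ matCone G) :
    ∀ y : Fin K → ℝ, (∀ j, 0 ≤ Gᵀ.mulVec y j) → euclNorm y ≤ ∑ i, y i := by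
  intro y hy
  set k : ℝ := (K : ℝ) with hkdef
  have hk2 : (2 : ℝ) ≤ k := by rw [hkdef]; exact_mod_cast hK
  have hkpos : (0 : ℝ) < k := by linarith
  -- every element of the SOC pairs nonnegatively with y
  have h0 : ∀ x ∈ SOC K, 0 ≤ ∑ i, x i * y i := by
    intro x hx
    obtain ⟨r, hr, rfl⟩ := hssc1 hx
    have heq : ∑ i, (G.mulVec r) i * y i = ∑ j, r j * (Gᵀ.mulVec y) j := by
      simp only [mulVec, dotProduct, transpose_apply, Finset.sum_mul, Finset.mul_sum]
      rw [Finset.sum_comm]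
      apply Finset.sum_congr rfl
      intro j _
      apply Finset.sum_congr rfl
      intro i _
      ring
    rw [heq]
    exact Finset.sum_nonneg fun j _ => mul_nonneg (hr j) (hy j)
  set S := ∑ i, y i with hS
  -- the all-ones vector lies in the SOC
  have hone : (fun _ : Fin K => (1 : ℝ)) ∈ SOC K := by
    constructor
    · intro i; norm_num
    · have h1 : euclNorm (fun _ : Fin K => (1 : ℝ)) = Real.sqrt k := by
        simp [euclNorm, hkdef]
      rw [h1, ← Real.sqrt_mul (by linarith)]
      have : Real.sqrt ((k - 1) * k) ≤ Real.sqrt (k * k) := by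
        apply Real.sqrt_le_sqrt; nlinarith
      calc Real.sqrt ((k - 1) * k) ≤ Real.sqrt (k * k) := this
        _ = k := Real.sqrt_mul_self (le_of_lt hkpos)
        _ = ∑ _i : Fin K, (1 : ℝ) := by simp [hkdef]
  have hS0 : 0 ≤ S := by
    have := h0 _ hone
    simpa [hS] using this
  -- center y
  set z : Fin K → ℝ := fun i => y i - S / k with hz
  have hzsum : ∑ i, z i = 0 := by
    simp only [hz, Finset.sum_sub_distrib]
    rw [Finset.sum_const, Finset.card_univ, Fintype.card_fin]
    rw [nsmul_eq_mul, ← hkdef, show k * (S / k) = S by rw [mul_comm]; exact div_mul_cancel₀ S hkpos.ne', ← hS, sub_self]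
  set Q := ∑ i, z i ^ 2 with hQ
  have hQ0 : 0 ≤ Q := Finset.sum_nonneg fun i _ => sq_nonneg _
  have hzy : ∑ i, z i * y i = Q := by
    have : ∀ i, z i * y i = z i ^ 2 + (S / k) * z i := by
      intro i; simp only [hz]; ring
    rw [Finset.sum_congr rfl fun i _ => this i, Finset.sum_add_distrib, ← Finset.mul_sum, hzsum]
    simp [hQ]
  have hy2 : ∑ i, y i ^ 2 = Q + S ^ 2 / k := by
    have : ∀ i, y i ^ 2 = z i ^ 2 + (2 * (S / k)) * z i + (S / k) ^ 2 := by
      intro i; simp only [hz]; ring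
    rw [Finset.sum_congr rfl fun i _ => this i]
    rw [Finset.sum_add_distrib, Finset.sum_add_distrib, ← Finset.mul_sum, hzsum,
      Finset.sum_const, Finset.card_univ, Fintype.card_fin, nsmul_eq_mul, ← hQ, ← hkdef]
    have hkne : k ≠ 0 := ne_of_gt hkpos
    field_simp
    ring
  -- reduce goal to a bound on Q
  clear_value k S z Q
  have hgoal : Q ≤ S ^ 2 * (k - 1) / k → euclNorm y ≤ S := by
    intro hQle
    have h1 : ∑ i, y i ^ 2 ≤ S ^ 2 := by
      rw [hy2]
      have : Q + S ^ 2 / k ≤ S ^ 2 * (k - 1) / k + S ^ 2 / k := by linarith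
      calc Q + S ^ 2 / k ≤ S ^ 2 * (k - 1) / k + S ^ 2 / k := this
        _ = S ^ 2 := by field_simp; ring
    calc euclNorm y = Real.sqrt (∑ i, y i ^ 2) := rfl
      _ ≤ Real.sqrt (S ^ 2) := Real.sqrt_le_sqrt h1
      _ = S := Real.sqrt_sq hS0
  -- case Q = 0
  rcases eq_or_lt_of_le hQ0 with hQz | hQpos
  · apply hgoal
    rw [← hQz]
    apply div_nonneg (mul_nonneg (sq_nonneg S) (by linarith)) hkpos.le
  -- case Q > 0 : use the test vector x i = c - z i
  set c := Real.sqrt ((k - 1) * Q / k) with hc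
  have hc2 : c ^ 2 = (k - 1) * Q / k :=
    Real.sq_sqrt (div_nonneg (mul_nonneg (by linarith) hQ0) hkpos.le)
  have hcpos : 0 < c := Real.sqrt_pos.mpr (div_pos (mul_pos (by linarith) hQpos) hkpos)
  have hkc : k * c ^ 2 = (k - 1) * Q := by rw [hc2]; field_simp
  clear_value c
  -- each z i is at most c, via Cauchy-Schwarz on the other coordinates
  have hzc : ∀ i, z i ≤ c := by
    intro i
    have hsum' : ∑ j ∈ Finset.univ.erase i, z j = -z i := by
      have := Finset.add_sum_erase Finset.univ z (Finset.mem_univ i)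
      linarith [hzsum ▸ this]
    have hsq' : ∑ j ∈ Finset.univ.erase i, z j ^ 2 = Q - z i ^ 2 := by
      have := Finset.add_sum_erase Finset.univ (fun j => z j ^ 2) (Finset.mem_univ i)
      have h2 : z i ^ 2 + ∑ j ∈ Finset.univ.erase i, z j ^ 2 = Q := by rw [this, ← hQ]
      linarith
    have hcs := sq_sum_le_card_mul_sum_sq (s := Finset.univ.erase i) (f := z)
    rw [hsum', hsq', Finset.card_erase_of_mem (Finset.mem_univ i), Finset.card_univ,
      Fintype.card_fin] at hcs
    have hcard : ((K - 1 : ℕ) : ℝ) = k - 1 := by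
      rw [hkdef]; push_cast [Nat.cast_sub (by omega : 1 ≤ K)]; ring
    rw [hcard] at hcs
    -- hcs : (-z i)^2 ≤ (k-1) * (Q - z i ^ 2)
    have hkey : k * z i ^ 2 ≤ (k - 1) * Q := by nlinarith
    by_contra hcon
    push_neg at hcon
    have h1 : c ^ 2 < z i ^ 2 := by nlinarith
    nlinarith [mul_pos hkpos (sub_pos.mpr h1)]
  have hxmem : (fun i => c - z i) ∈ SOC K := by
    constructor
    · intro i; show (0:ℝ) ≤ c - z i; linarith [hzc i]
    · have hsx : ∑ i, (c - z i) = k * c := by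
        rw [Finset.sum_sub_distrib, hzsum, Finset.sum_const, Finset.card_univ,
          Fintype.card_fin]
        simp [hkdef]
      have hsx2 : ∑ i, (c - z i) ^ 2 = k * Q := by
        have : ∀ i, (c - z i) ^ 2 = c ^ 2 - 2 * c * z i + z i ^ 2 := fun i => by ring
        rw [Finset.sum_congr rfl fun i _ => this i, Finset.sum_add_distrib,
          Finset.sum_sub_distrib, ← Finset.mul_sum, hzsum, Finset.sum_const,
          Finset.card_univ, Fintype.card_fin, ← hQ]
        rw [hc2, hkdef]
        field_simp
        linear_combination ((K:ℝ) * Q - Q) * mul_inv_cancel₀ (by rw [← hkdef]; exact hkpos.ne' : (K:ℝ) ≠ 0)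
      have heq2 : (k - 1) * (k * Q) = (k * c) ^ 2 := by
        rw [mul_pow, hc2]; field_simp
      have hb : ∑ i, (fun i => c - z i) i = ∑ i, (c - z i) := rfl
      rw [show ((K:ℝ) - 1) = k - 1 from hkdef ▸ rfl, hb, hsx]
      apply le_of_eq
      calc Real.sqrt (k - 1) * euclNorm (fun i => c - z i)
          = Real.sqrt (k - 1) * Real.sqrt (∑ i, (c - z i) ^ 2) := rfl
        _ = Real.sqrt ((k - 1) * (∑ i, (c - z i) ^ 2)) := by
            rw [Real.sqrt_mul (by linarith)]
        _ = Real.sqrt ((k * c) ^ 2) := by rw [hsx2, heq2]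
        _ = k * c := Real.sqrt_sq (by positivity)
  -- pairing the test vector with y
  have hpair := h0 _ hxmem
  have hpair' : Q ≤ c * S := by
    have : ∑ i, (c - z i) * y i = c * S - Q := by
      have : ∀ i, (c - z i) * y i = c * y i - z i * y i := fun i => by ring
      rw [Finset.sum_congr rfl fun i _ => this i, Finset.sum_sub_distrib, ← Finset.mul_sum,
        hzy, ← hS]
    rw [this] at hpair
    linarith
  apply hgoal
  -- from Q ≤ c S and c² = (k-1) Q / k, Q > 0 : Q ≤ S² (k-1)/k
  have h1 : Q ^ 2 ≤ c ^ 2 * S ^ 2 := by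
    nlinarith [mul_le_mul hpair' hpair' hQpos.le (mul_nonneg hcpos.le hS0)]
  rw [le_div_iff₀ hkpos]
  nlinarith [mul_le_mul_of_nonneg_left h1 hkpos.le, hkc, hQpos]
end
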